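/- Let K : ℝ → ℝ be continuously differentiable with K' ∈ L²(ℝ). Let φ and ψ be real random variables with E(φ − ψ)² < ∞, h > 0, and K_h(u) = (1/h)K(u/h). Then ∫_ℝ [E(K_h(x − ψ) − K_h(x − φ))]² dx ≤ (‖K'‖₂²/h³) · E(φ − ψ)². -/

import Mathlib

/-!
Taylor's formula `K (y + t) - K y = t ∫₀¹ K' (y + s t) ds` and Jensen's inequality on `[0, 1]`
give the translation estimate `∫ |K (y + t) - K y|² dy ≤ t² ‖K'‖₂²`; rescaling turns it into
`∫ |K_h (x - ψ) - K_h (x - φ)|² dx ≤ (φ - ψ)² ‖K'‖₂² / h³` for every outcome. Jensen's inequality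
in `ω` moves the square inside the expectation, and Tonelli exchanges the `x`-integral with the
expectation. All estimates are made for lower Lebesgue integrals of `‖·‖ₑ ^ 2`, so integrability
only enters in the final conversion back to Bochner integrals.
-/

open MeasureTheory Set
open scoped ENNReal

lemma enorm_sq_eq_ofReal_sq (r : ℝ) : ‖r‖ₑ ^ 2 = ENNReal.ofReal (r ^ 2) := by
  rw [Real.enorm_eq_ofReal_abs, ← ENNReal.ofReal_pow (abs_nonneg r), sq_abs]

section SquareIntegrals

variable {α : Type*} [MeasurableSpace α] {μ : Measure α}

lemma ofReal_integral_sq_eq_lintegral_enorm_sq {f : α → ℝ}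
    (hf : Integrable (fun a ↦ f a ^ 2) μ) :
    ENNReal.ofReal (∫ a, f a ^ 2 ∂μ) = ∫⁻ a, ‖f a‖ₑ ^ 2 ∂μ := by
  simp_rw [ofReal_integral_eq_lintegral_ofReal hf (ae_of_all _ fun a ↦ sq_nonneg (f a)),
    enorm_sq_eq_ofReal_sq]

lemma integral_sq_le_toReal_lintegral_enorm_sq (f : α → ℝ) :
    ∫ a, f a ^ 2 ∂μ ≤ (∫⁻ a, ‖f a‖ₑ ^ 2 ∂μ).toReal := by
  by_cases hf : Integrable (fun a ↦ f a ^ 2) μ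
  · rw [← ofReal_integral_sq_eq_lintegral_enorm_sq hf,
      ENNReal.toReal_ofReal (integral_nonneg fun a ↦ sq_nonneg (f a))]
  · rw [integral_undef hf]
    exact ENNReal.toReal_nonneg

variable {E : Type*} [NormedAddCommGroup E] [NormedSpace ℝ E]

lemma enorm_integral_sq_le_lintegral_enorm_sq [IsProbabilityMeasure μ] (f : α → E) :
    ‖∫ a, f a ∂μ‖ₑ ^ 2 ≤ ∫⁻ a, ‖f a‖ₑ ^ 2 ∂μ := by
  by_cases hf : AEStronglyMeasurable f μ
  · calc ‖∫ a, f a ∂μ‖ₑ ^ 2 ≤ eLpNorm f 1 μ ^ 2 := by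
          rw [eLpNorm_one_eq_lintegral_enorm]
          gcongr
          exact enorm_integral_le_lintegral_enorm f
      _ ≤ eLpNorm f 2 μ ^ 2 := by
          gcongr
          exact eLpNorm_le_eLpNorm_of_exponent_le one_le_two hf
      _ = ∫⁻ a, ‖f a‖ₑ ^ 2 ∂μ := by
          simpa using eLpNorm_nnreal_pow_eq_lintegral (f := f) (μ := μ) (p := 2) two_ne_zero
  · simp [integral_non_aestronglyMeasurable hf]

end SquareIntegrals

lemma lintegral_comp_sub_div {g : ℝ → ℝ≥0∞} (hg : Measurable g) {h : ℝ} (hh : 0 < h) (a : ℝ) :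
    ∫⁻ x, g ((x - a) / h) = ENNReal.ofReal h * ∫⁻ y, g y := by
  calc ∫⁻ x, g ((x - a) / h) = ∫⁻ x, g (h⁻¹ * x) := by
        simp_rw [div_eq_inv_mul]
        exact lintegral_sub_right_eq_self (fun x ↦ g (h⁻¹ * x)) a
    _ = ∫⁻ y, g y ∂(Measure.map (h⁻¹ * ·) volume) :=
        (lintegral_map hg (measurable_const_mul _)).symm
    _ = ENNReal.ofReal h * ∫⁻ y, g y := by
        rw [Real.map_volume_mul_left (inv_ne_zero hh.ne'), inv_inv, lintegral_smul_measure,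
          abs_of_pos hh, smul_eq_mul]

instance : IsProbabilityMeasure (volume.restrict (Ioc (0 : ℝ) 1)) :=
  ⟨by simp⟩

section Increments

variable {E : Type*} [NormedAddCommGroup E] [NormedSpace ℝ E] [CompleteSpace E] {f : ℝ → E}

lemma sub_eq_smul_integral_deriv (hf : ContDiff ℝ 1 f) (x t : ℝ) :
    f (x + t) - f x = t • ∫ s in (0 : ℝ)..1, deriv f (t * s + x) := by
  rw [intervalIntegral.smul_integral_comp_mul_add, mul_zero, mul_one, zero_add, add_comm t x,
    intervalIntegral.integral_deriv_eq_sub (fun y _ ↦ hf.differentiable one_ne_zero y)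
      ((hf.continuous_deriv le_rfl).intervalIntegrable _ _)]

lemma enorm_sub_sq_le (hf : ContDiff ℝ 1 f) (x t : ℝ) :
    ‖f (x + t) - f x‖ₑ ^ 2 ≤ ‖t‖ₑ ^ 2 * ∫⁻ s in Ioc 0 1, ‖deriv f (t * s + x)‖ₑ ^ 2 := by
  rw [sub_eq_smul_integral_deriv hf, enorm_smul, mul_pow,
    intervalIntegral.integral_of_le zero_le_one]
  gcongr
  exact enorm_integral_sq_le_lintegral_enorm_sq _

lemma lintegral_enorm_sub_sq_le (hf : ContDiff ℝ 1 f) (t : ℝ) :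
    ∫⁻ x, ‖f (x + t) - f x‖ₑ ^ 2 ≤ ‖t‖ₑ ^ 2 * ∫⁻ y, ‖deriv f y‖ₑ ^ 2 := by
  have hmeas : Measurable fun p : ℝ × ℝ ↦ ‖deriv f (t * p.2 + p.1)‖ₑ ^ 2 := by
    have := hf.continuous_deriv le_rfl
    exact Continuous.measurable (by fun_prop)
  calc ∫⁻ x, ‖f (x + t) - f x‖ₑ ^ 2
      ≤ ∫⁻ x, ‖t‖ₑ ^ 2 * ∫⁻ s in Ioc 0 1, ‖deriv f (t * s + x)‖ₑ ^ 2 :=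
        lintegral_mono fun x ↦ enorm_sub_sq_le hf x t
    _ = ‖t‖ₑ ^ 2 * ∫⁻ s in Ioc 0 1, ∫⁻ x, ‖deriv f (t * s + x)‖ₑ ^ 2 := by
        rw [lintegral_const_mul _ hmeas.lintegral_prod_right',
          lintegral_lintegral_swap hmeas.aemeasurable]
    _ = ‖t‖ₑ ^ 2 * ∫⁻ y, ‖deriv f y‖ₑ ^ 2 := by
        simp [lintegral_add_left_eq_self (fun y ↦ ‖deriv f y‖ₑ ^ 2)]

lemma lintegral_enorm_sub_dilate_sq_le (hf : ContDiff ℝ 1 f) {h : ℝ} (hh : 0 < h) (a b : ℝ) :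
    ∫⁻ x, ‖(1 / h) • f ((x - b) / h) - (1 / h) • f ((x - a) / h)‖ₑ ^ 2
      ≤ ENNReal.ofReal ((a - b) ^ 2 / h ^ 3) * ∫⁻ y, ‖deriv f y‖ₑ ^ 2 := by
  set t := (a - b) / h
  have hshift (x : ℝ) : (x - b) / h = (x - a) / h + t := by ring
  have hmeas : Measurable fun y ↦ ‖(1 / h) • f (y + t) - (1 / h) • f y‖ₑ ^ 2 := by
    have := hf.continuous
    exact Continuous.measurable (by fun_prop)
  calc ∫⁻ x, ‖(1 / h) • f ((x - b) / h) - (1 / h) • f ((x - a) / h)‖ₑ ^ 2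
      = ENNReal.ofReal h * ∫⁻ y, ‖(1 / h) • f (y + t) - (1 / h) • f y‖ₑ ^ 2 := by
        simp_rw [hshift]
        exact lintegral_comp_sub_div hmeas hh a
    _ = ENNReal.ofReal h * (‖1 / h‖ₑ ^ 2 * ∫⁻ y, ‖f (y + t) - f y‖ₑ ^ 2) := by
        simp_rw [← smul_sub, enorm_smul, mul_pow]
        rw [lintegral_const_mul' _ _ (by simp)]
    _ ≤ ENNReal.ofReal h * (‖1 / h‖ₑ ^ 2 * (‖t‖ₑ ^ 2 * ∫⁻ y, ‖deriv f y‖ₑ ^ 2)) := by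
        gcongr
        exact lintegral_enorm_sub_sq_le hf t
    _ = ENNReal.ofReal ((a - b) ^ 2 / h ^ 3) * ∫⁻ y, ‖deriv f y‖ₑ ^ 2 := by
        rw [← mul_assoc, ← mul_assoc, enorm_sq_eq_ofReal_sq, enorm_sq_eq_ofReal_sq,
          ← ENNReal.ofReal_mul hh.le, ← ENNReal.ofReal_mul (by positivity)]
        congr 2
        simp only [t]
        field_simp

end Increments

theorem kernel_bias_bound {Ω : Type*} [MeasurableSpace Ω]
    (μ : Measure Ω) [IsProbabilityMeasure μ] (K : ℝ → ℝ)
    (hK : ContDiff ℝ 1 K) (hK' : MemLp (deriv K) 2 volume)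
    (φ ψ : Ω → ℝ) (hφ : Measurable φ) (hψ : Measurable ψ)
    (hL2 : Integrable (fun ω => (φ ω - ψ ω) ^ 2) μ)
    (h : ℝ) (hh : 0 < h) :
    ∫ x, (∫ ω, ((1 / h) * K ((x - ψ ω) / h) - (1 / h) * K ((x - φ ω) / h)) ∂μ) ^ 2 ≤
      ((∫ y, (deriv K y) ^ 2) / h ^ 3) * ∫ ω, (φ ω - ψ ω) ^ 2 ∂μ := by
  set D : ℝ → Ω → ℝ := fun x ω ↦ (1 / h) * K ((x - ψ ω) / h) - (1 / h) * K ((x - φ ω) / h)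
  have hD : Measurable fun p : ℝ × Ω ↦ ‖D p.1 p.2‖ₑ ^ 2 := by
    have := hK.continuous.measurable
    fun_prop
  have hJ := ofReal_integral_sq_eq_lintegral_enorm_sq hK'.integrable_sq
  have hE := ofReal_integral_eq_lintegral_ofReal (hL2.div_const (h ^ 3))
    (ae_of_all _ fun ω ↦ by positivity)
  have hbound : ∫⁻ x, ‖∫ ω, D x ω ∂μ‖ₑ ^ 2
      ≤ ENNReal.ofReal (∫ ω, (φ ω - ψ ω) ^ 2 / h ^ 3 ∂μ) * ENNReal.ofReal (∫ y, deriv K y ^ 2) :=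
    calc ∫⁻ x, ‖∫ ω, D x ω ∂μ‖ₑ ^ 2 ≤ ∫⁻ x, ∫⁻ ω, ‖D x ω‖ₑ ^ 2 ∂μ :=
          lintegral_mono fun x ↦ enorm_integral_sq_le_lintegral_enorm_sq _
      _ = ∫⁻ ω, (∫⁻ x, ‖D x ω‖ₑ ^ 2) ∂μ := lintegral_lintegral_swap hD.aemeasurable
      _ ≤ ∫⁻ ω, ENNReal.ofReal ((φ ω - ψ ω) ^ 2 / h ^ 3) * (∫⁻ y, ‖deriv K y‖ₑ ^ 2) ∂μ :=
          lintegral_mono fun ω ↦ lintegral_enorm_sub_dilate_sq_le hK hh (φ ω) (ψ ω)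
      _ = _ := by
          rw [lintegral_mul_const' _ _ (hJ ▸ ENNReal.ofReal_ne_top), ← hE, hJ]
  calc ∫ x, (∫ ω, D x ω ∂μ) ^ 2 ≤ (∫⁻ x, ‖∫ ω, D x ω ∂μ‖ₑ ^ 2).toReal :=
        integral_sq_le_toReal_lintegral_enorm_sq _
    _ ≤ (ENNReal.ofReal (∫ ω, (φ ω - ψ ω) ^ 2 / h ^ 3 ∂μ)
          * ENNReal.ofReal (∫ y, deriv K y ^ 2)).toReal :=
        ENNReal.toReal_mono (by finiteness) hbound
    _ = _ := by
        rw [ENNReal.toReal_mul, ENNReal.toReal_ofReal (integral_nonneg fun ω ↦ by positivity),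
          ENNReal.toReal_ofReal (integral_nonneg fun y ↦ sq_nonneg _), integral_div]
        ring
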